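/- arXiv:2309.14691 — 3 statements merged into one kernel-verified Lean document; each statement's English description precedes it below -/
import Mathlib

section
/- For every ε with 0 < ε < 1/2 there exists H₀ > 0 such that for all H ≥ H₀, the map f(z) = h_H(z − 1/2) sends the interval [1 − ε, 1] into itself and is a contraction on [1 − ε, 1] (its derivative satisfies |f′(z)| < 1 for all z ∈ [1 − ε, 1], with a contraction constant strictly less than 1); consequently f has a unique fixed point in [1 − ε, 1], and this fixed point is stable. -/
/-!
On `[1 - ε, 1]` the argument `z - 1/2` of the sigmoid is at least `δ = 1/2 - ε > 0`, so
`e = exp (-H (z - 1/2)) ≤ exp (-H δ)`, and both `exp (-H δ)` and `H exp (-H δ)` tend to `0` as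
`H → ∞`. Since `1 - e ≤ 1 / (1 + e) ≤ 1` and `h_H' = H e / (1 + e)² ≤ H e`, for large `H` the map
`f` sends the interval into itself with `|f'| ≤ 1/2`, and Banach's fixed-point theorem on the
complete interval gives the fixed point, its uniqueness and the convergence of the iterates.
-/

open Filter

/-- The parametrized sigmoid `h_H(x) = 1/(1 + exp(−H·x))`. -/
noncomputable def sigmoidH (H x : ℝ) : ℝ := 1 / (1 + Real.exp (-H * x))

open Real Set Topology
open scoped NNReal

theorem LipschitzOnWith.exists_fixedPoint_tendsto_iterate {α : Type*} [MetricSpace α]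
    {K : ℝ≥0} {f : α → α} {s : Set α} (hK : K < 1) (hf : LipschitzOnWith K f s)
    (hsf : MapsTo f s s) (hsc : IsComplete s) (hne : s.Nonempty) :
    ∃ x ∈ s, f x = x ∧ (∀ y ∈ s, f y = y → y = x) ∧
      ∀ y ∈ s, Tendsto (fun n => f^[n] y) atTop (𝓝 x) := by
  have hcontr : ContractingWith K (hsf.restrict f s s) := ⟨hK, hf.mapsToRestrict hsf⟩
  have unique : ∀ x ∈ s, f x = x → ∀ y ∈ s, f y = y → y = x := by
    intro x hx hfx y hy hfy
    have h := hf.dist_le_mul y hy x hx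
    rw [hfx, hfy] at h
    have hK' : (K : ℝ) < 1 := hK
    exact dist_eq_zero.mp (le_antisymm
      (by nlinarith [dist_nonneg (x := y) (y := x)]) dist_nonneg)
  obtain ⟨x₀, hx₀⟩ := hne
  obtain ⟨x, hx, hfx, -, -⟩ := hcontr.exists_fixedPoint' hsc hsf hx₀ (edist_ne_top _ _)
  refine ⟨x, hx, hfx, unique x hx hfx, fun y hy => ?_⟩
  obtain ⟨x', hx', hfx', hlim, -⟩ := hcontr.exists_fixedPoint' hsc hsf hy (edist_ne_top _ _)
  rwa [unique x hx hfx x' hx' hfx'] at hlim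

theorem hasDerivAt_sigmoidH (H x : ℝ) :
    HasDerivAt (sigmoidH H) (H * exp (-H * x) / (1 + exp (-H * x)) ^ 2) x := by
  have hexp : HasDerivAt (fun x => 1 + exp (-H * x)) (exp (-H * x) * (-H * 1)) x :=
    (((hasDerivAt_id x).const_mul (-H)).exp).const_add 1
  have hsig : sigmoidH H = fun x => (1 + exp (-H * x))⁻¹ := by
    funext x; rw [sigmoidH, one_div]
  rw [hsig]
  exact (hexp.inv (by positivity)).congr_deriv (by ring)

theorem sigmoidH_le_one (H x : ℝ) : sigmoidH H x ≤ 1 := by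
  rw [sigmoidH, div_le_one (by positivity)]
  linarith [exp_pos (-H * x)]

theorem one_sub_exp_le_sigmoidH (H x : ℝ) : 1 - exp (-H * x) ≤ sigmoidH H x := by
  rw [sigmoidH, le_div_iff₀ (by positivity)]
  nlinarith [sq_nonneg (exp (-H * x))]

theorem abs_deriv_sigmoidH_le {H : ℝ} (hH : 0 ≤ H) (x : ℝ) :
    |deriv (sigmoidH H) x| ≤ H * exp (-H * x) := by
  rw [(hasDerivAt_sigmoidH H x).deriv, abs_of_nonneg (by positivity)]
  exact div_le_self (by positivity) (by nlinarith [exp_pos (-H * x)])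

theorem exp_neg_mul_le_of_le {H x y : ℝ} (hH : 0 ≤ H) (hxy : x ≤ y) :
    exp (-H * y) ≤ exp (-H * x) :=
  exp_le_exp.2 (by nlinarith)

theorem one_sub_le_sigmoidH_of_exp_le {H δ x ε : ℝ} (hH : 0 ≤ H) (hx : δ ≤ x)
    (h : exp (-H * δ) ≤ ε) :
    1 - ε ≤ sigmoidH H x := by
  linarith [one_sub_exp_le_sigmoidH H x, exp_neg_mul_le_of_le hH hx]

theorem abs_deriv_sigmoidH_le_of_mul_exp_le {H δ x C : ℝ} (hH : 0 ≤ H) (hx : δ ≤ x)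
    (h : H * exp (-H * δ) ≤ C) :
    |deriv (sigmoidH H) x| ≤ C :=
  calc |deriv (sigmoidH H) x| ≤ H * exp (-H * x) := abs_deriv_sigmoidH_le hH x
    _ ≤ H * exp (-H * δ) := mul_le_mul_of_nonneg_left (exp_neg_mul_le_of_le hH hx) hH
    _ ≤ C := h

theorem tendsto_pow_mul_exp_neg_mul_atTop (n : ℕ) {c : ℝ} (hc : 0 < c) :
    Tendsto (fun H => H ^ n * exp (-H * c)) atTop (𝓝 0) := by
  have := tendsto_rpow_mul_exp_neg_mul_atTop_nhds_zero n c hc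
  exact this.congr fun H => by rw [Real.rpow_natCast, neg_mul, neg_mul, mul_comm c]

theorem stmt_7 (ε : ℝ) (hεpos : 0 < ε) (hεlt : ε < 1 / 2) :
    ∃ H₀ > (0 : ℝ), ∀ H ≥ H₀,
      let f : ℝ → ℝ := fun z => sigmoidH H (z - 1 / 2)
      -- `f` maps `[1 − ε, 1]` into itself
      Set.MapsTo f (Set.Icc (1 - ε) 1) (Set.Icc (1 - ε) 1) ∧
      -- the derivative of `f` is strictly less than 1 in absolute value on `[1 − ε, 1]`
      (∀ z ∈ Set.Icc (1 - ε) (1 : ℝ), |deriv f z| < 1) ∧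
      -- `f` is a contraction on `[1 − ε, 1]` with contraction constant strictly less than 1
      (∃ L : NNReal, L < 1 ∧ LipschitzOnWith L f (Set.Icc (1 - ε) 1)) ∧
      -- consequently `f` has a unique fixed point in `[1 − ε, 1]`, and it is stable:
      -- iterates of `f` starting anywhere in `[1 − ε, 1]` converge to it
      (∃ zf ∈ Set.Icc (1 - ε) (1 : ℝ), f zf = zf ∧
        (∀ z ∈ Set.Icc (1 - ε) (1 : ℝ), f z = z → z = zf) ∧
        (∀ z₀ ∈ Set.Icc (1 - ε) (1 : ℝ),
          Tendsto (fun k => f^[k] z₀) atTop (nhds zf))) := by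
  set δ := 1 / 2 - ε with hδ_def
  have hδ : 0 < δ := sub_pos.2 hεlt
  obtain ⟨H₀, hH₀⟩ := eventually_atTop.1 <|
    ((tendsto_pow_mul_exp_neg_mul_atTop 0 hδ).eventually (ge_mem_nhds hεpos)).and
      ((tendsto_pow_mul_exp_neg_mul_atTop 1 hδ).eventually (ge_mem_nhds one_half_pos))
  refine ⟨max H₀ 1, by positivity, fun H hH => ?_⟩
  intro f
  obtain ⟨hexp, hmul⟩ := hH₀ H (le_of_max_le_left hH)
  rw [pow_zero, one_mul] at hexp
  rw [pow_one] at hmul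
  have hHpos : 0 ≤ H := by linarith [le_max_right H₀ 1]
  have hshift : ∀ z ∈ Icc (1 - ε) 1, δ ≤ z - 1 / 2 := fun z hz => by linarith [hz.1]
  have hmaps : MapsTo f (Icc (1 - ε) 1) (Icc (1 - ε) 1) := fun z hz =>
    ⟨one_sub_le_sigmoidH_of_exp_le hHpos (hshift z hz) hexp, sigmoidH_le_one H _⟩
  have hderiv : ∀ z ∈ Icc (1 - ε) 1, |deriv f z| ≤ 1 / 2 := fun z hz => by
    rw [deriv_comp_sub_const]
    exact abs_deriv_sigmoidH_le_of_mul_exp_le hHpos (hshift z hz) hmul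
  have hlip : LipschitzOnWith (1 / 2) f (Icc (1 - ε) 1) := by
    refine (convex_Icc _ _).lipschitzOnWith_of_nnnorm_deriv_le
      (fun z _ => ((hasDerivAt_sigmoidH H _).comp_sub_const z _).differentiableAt)
      fun z hz => ?_
    rw [← NNReal.coe_le_coe, coe_nnnorm, Real.norm_eq_abs]
    simpa using hderiv z hz
  have hhalf : (1 / 2 : ℝ≥0) < 1 := by rw [← NNReal.coe_lt_coe]; norm_num
  refine ⟨hmaps, fun z hz => (hderiv z hz).trans_lt one_half_lt_one,
    ⟨1 / 2, hhalf, hlip⟩, ?_⟩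
  exact hlip.exists_fixedPoint_tendsto_iterate hhalf hmaps isClosed_Icc.isComplete
    (nonempty_Icc.2 (by linarith))
end

section
/- Let M be a DFA with state set Fin n, input alphabet Fin m, start state q₀, and accepting set F. For every input word w over Fin m, let z(w) ∈ ℝⁿ denote the result of iterating the second-order saturated-linear network step along the letters of w starting from e(q₀). Then the readout Σ_{i ∈ F} z(w)_i equals 1 if w is accepted by M and equals 0 otherwise; in particular w is accepted by M if and only if Σ_{i ∈ F} z(w)_i = 1. -/
/-- One-hot vector of an element of `Fin n`. -/
def oneHot {n : ℕ} (q : Fin n) : Fin n → ℝ := fun i => if i = q then 1 else 0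

/-- Transition tensor of a DFA with transition function `δ`:
`W i j k = 1` if `i = δ j k` and `0` otherwise. -/
def transTensor {n m : ℕ} (δ : Fin n → Fin m → Fin n) : Fin n → Fin n → Fin m → ℝ :=
  fun i j k => if i = δ j k then 1 else 0

/-- The saturated-linear activation function. -/
noncomputable def satLin (x : ℝ) : ℝ := if x < 0 then 0 else if x ≤ 1 then x else 1

/-- The second-order saturated-linear network step of a DFA:
`N(z, a) i = σ(Σ_j W i j a * z j)`. -/
noncomputable def netStep {n m : ℕ} (δ : Fin n → Fin m → Fin n)
    (z : Fin n → ℝ) (a : Fin m) : Fin n → ℝ :=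
  fun i => satLin (∑ j : Fin n, transTensor δ i j a * z j)

/-- Iterating the network step along the letters of a word. -/
noncomputable def netRun {n m : ℕ} (δ : Fin n → Fin m → Fin n)
    (z : Fin n → ℝ) (w : List (Fin m)) : Fin n → ℝ :=
  w.foldl (netStep δ) z

/-- The extension `δ*` of the DFA transition function to input words. -/
def dfaRun {n m : ℕ} (δ : Fin n → Fin m → Fin n) (q : Fin n) (w : List (Fin m)) : Fin n :=
  w.foldl δ q


lemma netStep_oneHot {n m : ℕ} (δ : Fin n → Fin m → Fin n) (q : Fin n) (a : Fin m) :
    netStep δ (oneHot q) a = oneHot (δ q a) := by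
  funext i
  have : (∑ j : Fin n, transTensor δ i j a * oneHot q j)
      = if i = δ q a then 1 else 0 := by
    rw [Finset.sum_eq_single q]
    · simp [transTensor, oneHot]
    · intro b _ hb
      simp [oneHot, hb]
    · simp
  show satLin _ = _
  rw [this]
  unfold oneHot satLin
  by_cases h : i = δ q a <;> norm_num [h]

lemma netRun_oneHot {n m : ℕ} (δ : Fin n → Fin m → Fin n) (q : Fin n) (w : List (Fin m)) :
    netRun δ (oneHot q) w = oneHot (dfaRun δ q w) := by
  induction w generalizing q with
  | nil => rfl
  | cons a t ih =>
      simp only [netRun, dfaRun, List.foldl_cons]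
      rw [netStep_oneHot]
      exact ih (δ q a)

theorem stmt_12 (n m : ℕ) (hn : 1 ≤ n) (hm : 1 ≤ m)
    (δ : Fin n → Fin m → Fin n) (q₀ : Fin n) (F : Finset (Fin n))
    (w : List (Fin m)) :
    (∑ i ∈ F, netRun δ (oneHot q₀) w i = if dfaRun δ q₀ w ∈ F then 1 else 0) ∧
    (dfaRun δ q₀ w ∈ F ↔ ∑ i ∈ F, netRun δ (oneHot q₀) w i = 1) := by
  rw [netRun_oneHot]
  have h : (∑ i ∈ F, oneHot (dfaRun δ q₀ w) i)
      = if dfaRun δ q₀ w ∈ F then 1 else 0 := by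
    simp [oneHot, Finset.sum_ite_eq']
  refine ⟨h, ?_⟩
  rw [h]
  by_cases hF : dfaRun δ q₀ w ∈ F <;> simp [hF]
end

section
/- Let M be a DFA with state set Fin n (n ≥ 1), input alphabet Fin m, and start state q₀, and let ε₀ satisfy 0 < ε₀ < 1/(2n). Then there exists H₀ > 0 such that for all H ≥ H₀, for every input word w = a₁a₂…a_T over Fin m and every 0 ≤ t ≤ T, the vector z_t obtained by iterating the second-order sigmoid network step N_H along the letters of w starting from z_0 = e(q₀) satisfies ‖z_t − e(δ*(q₀, a₁…a_t))‖_∞ ≤ ε₀; that is, the n-neuron bounded-precision sigmoid network tracks the DFA computation in real time, within error ε₀ at every step, uniformly over words of arbitrary length. -/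
/-- The second-order sigmoid network step of a DFA with sensitivity `H`:
`N_H(z, a) i = h_H((Σ_j W i j a * z j) − 1/2)`. -/
noncomputable def netStepH {n m : ℕ} (δ : Fin n → Fin m → Fin n) (H : ℝ)
    (z : Fin n → ℝ) (a : Fin m) : Fin n → ℝ :=
  fun i => sigmoidH H ((∑ j : Fin n, transTensor δ i j a * z j) - 1 / 2)

/-- Iterating the sigmoid network step along the letters of a word. -/
noncomputable def netRunH {n m : ℕ} (δ : Fin n → Fin m → Fin n) (H : ℝ)
    (z : Fin n → ℝ) (w : List (Fin m)) : Fin n → ℝ :=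
  w.foldl (netStepH δ H) z

open Real

lemma sigmoidH_pos (H x : ℝ) : 0 < sigmoidH H x := by
  unfold sigmoidH
  positivity

lemma sigmoidH_le_exp (H x : ℝ) : sigmoidH H x ≤ exp (H * x) := by
  calc sigmoidH H x ≤ 1 / exp (-H * x) :=
        one_div_le_one_div_of_le (exp_pos _) (by linarith)
    _ = exp (H * x) := by rw [one_div, ← exp_neg, neg_mul, neg_neg]

lemma one_sub_sigmoidH (H x : ℝ) : 1 - sigmoidH H x = sigmoidH H (-x) := by
  unfold sigmoidH
  rw [neg_mul, neg_mul, mul_neg, neg_neg]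
  have hmul : exp (-(H * x)) * exp (H * x) = 1 := by rw [← exp_add, neg_add_cancel, exp_zero]
  field_simp
  linear_combination hmul

lemma abs_sigmoidH_sub_half_sub_le {H y b r : ℝ} (hH : 0 ≤ H) (hb : b = 0 ∨ b = 1)
    (hy : |y - b| ≤ r) : |sigmoidH H (y - 1 / 2) - b| ≤ exp (-(H * (1 / 2 - r))) := by
  rcases hb with rfl | rfl
  · rw [sub_zero, abs_of_pos (sigmoidH_pos _ _)]
    rw [sub_zero] at hy
    calc sigmoidH H (y - 1 / 2) ≤ exp (H * (y - 1 / 2)) := sigmoidH_le_exp _ _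
      _ ≤ exp (-(H * (1 / 2 - r))) := by
        gcongr
        nlinarith [le_of_abs_le hy]
  · rw [abs_sub_comm, one_sub_sigmoidH, abs_of_pos (sigmoidH_pos _ _)]
    calc sigmoidH H (-(y - 1 / 2)) ≤ exp (H * -(y - 1 / 2)) := sigmoidH_le_exp _ _
      _ ≤ exp (-(H * (1 / 2 - r))) := by
        gcongr
        nlinarith [neg_le_of_abs_le hy]

section Network

variable {n m : ℕ} (δ : Fin n → Fin m → Fin n)

lemma oneHot_eq_zero_or_one (q i : Fin n) : oneHot q i = 0 ∨ oneHot q i = 1 := by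
  unfold oneHot
  split_ifs <;> simp

lemma sum_transTensor_mul_oneHot (i q : Fin n) (a : Fin m) :
    ∑ j, transTensor δ i j a * oneHot q j = oneHot (δ q a) i := by
  simp [transTensor, oneHot]

lemma abs_sum_transTensor_mul_sub_oneHot_le {z : Fin n → ℝ} {q : Fin n} {ε : ℝ}
    (hz : ‖z - oneHot q‖ ≤ ε) (i : Fin n) (a : Fin m) :
    |∑ j, transTensor δ i j a * z j - oneHot (δ q a) i| ≤ n * ε := by
  rw [← sum_transTensor_mul_oneHot, ← Finset.sum_sub_distrib]
  calc |∑ j, (transTensor δ i j a * z j - transTensor δ i j a * oneHot q j)|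
      ≤ ∑ j, |transTensor δ i j a * z j - transTensor δ i j a * oneHot q j| :=
        Finset.abs_sum_le_sum_abs _ _
    _ ≤ ∑ _j : Fin n, ε := by
        gcongr with j
        have hW : |transTensor δ i j a| ≤ 1 := by unfold transTensor; split_ifs <;> simp
        have hzj : |z j - oneHot q j| ≤ ε := by
          simpa using (norm_le_pi_norm (z - oneHot q) j).trans hz
        rw [← mul_sub, abs_mul]
        exact (mul_le_of_le_one_left (abs_nonneg _) hW).trans hzj
    _ = n * ε := by simp

lemma norm_netStepH_sub_oneHot_le {H ε : ℝ} (hH : 0 ≤ H) {z : Fin n → ℝ} {q : Fin n}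
    (hz : ‖z - oneHot q‖ ≤ ε) (a : Fin m) :
    ‖netStepH δ H z a - oneHot (δ q a)‖ ≤ exp (-(H * (1 / 2 - n * ε))) := by
  refine (pi_norm_le_iff_of_nonneg (exp_pos _).le).2 fun i => ?_
  rw [Pi.sub_apply, Real.norm_eq_abs]
  exact abs_sigmoidH_sub_half_sub_le hH (oneHot_eq_zero_or_one _ i)
    (abs_sum_transTensor_mul_sub_oneHot_le δ hz i a)

lemma norm_netRunH_sub_oneHot_le {H ε : ℝ} (hH : 0 ≤ H)
    (hHε : exp (-(H * (1 / 2 - n * ε))) ≤ ε) (w : List (Fin m)) {z : Fin n → ℝ} {q : Fin n}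
    (hz : ‖z - oneHot q‖ ≤ ε) :
    ‖netRunH δ H z w - oneHot (dfaRun δ q w)‖ ≤ ε := by
  induction w generalizing z q with
  | nil => exact hz
  | cons a w ih => exact ih ((norm_netStepH_sub_oneHot_le δ hH hz a).trans hHε)

end Network

lemma exists_pos_forall_ge_exp_neg_mul_le {c ε : ℝ} (hc : 0 < c) (hε : 0 < ε) :
    ∃ H₀ > (0 : ℝ), ∀ H ≥ H₀, exp (-(H * c)) ≤ ε := by
  refine ⟨max 1 (-log ε / c), by positivity, fun H hH => ?_⟩
  have hlog : -log ε ≤ H * c := (div_le_iff₀ hc).1 ((le_max_right _ _).trans hH)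
  calc exp (-(H * c)) ≤ exp (log ε) := exp_le_exp.2 (by linarith)
    _ = ε := exp_log hε

theorem stmt_15_general (n m : ℕ)
    (δ : Fin n → Fin m → Fin n) (q₀ : Fin n)
    (ε₀ : ℝ) (hε₀pos : 0 < ε₀) (hε₀lt : ε₀ < 1 / (2 * n)) :
    ∃ H₀ > (0 : ℝ), ∀ H ≥ H₀, ∀ w : List (Fin m), ∀ t ≤ w.length,
      ‖netRunH δ H (oneHot q₀) (w.take t) - oneHot (dfaRun δ q₀ (w.take t))‖ ≤ ε₀ := by
  have hmargin : 0 < 1 / 2 - n * ε₀ := by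
    rcases (Nat.cast_nonneg n : (0 : ℝ) ≤ n).eq_or_lt with hn | hn
    · rw [← hn]; norm_num
    · rw [lt_div_iff₀ (by positivity)] at hε₀lt
      linarith
  obtain ⟨H₀, hH₀, hexp⟩ := exists_pos_forall_ge_exp_neg_mul_le hmargin hε₀pos
  refine ⟨H₀, hH₀, fun H hH w t _ => ?_⟩
  refine norm_netRunH_sub_oneHot_le δ (hH₀.le.trans hH) (hexp H hH) _ ?_
  rw [sub_self, norm_zero]
  exact hε₀pos.le

theorem stmt_15 (n m : ℕ) (hn : 1 ≤ n) (hm : 1 ≤ m)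
    (δ : Fin n → Fin m → Fin n) (q₀ : Fin n) (F : Finset (Fin n))
    (ε₀ : ℝ) (hε₀pos : 0 < ε₀) (hε₀lt : ε₀ < 1 / (2 * n)) :
    ∃ H₀ > (0 : ℝ), ∀ H ≥ H₀, ∀ w : List (Fin m), ∀ t ≤ w.length,
      ‖netRunH δ H (oneHot q₀) (w.take t) - oneHot (dfaRun δ q₀ (w.take t))‖ ≤ ε₀ :=
  stmt_15_general n m δ q₀ ε₀ hε₀pos hε₀lt
end
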